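/- arXiv:1910.12486 — 5 statements merged into one kernel-verified Lean document; each statement's English description precedes it below -/
import Mathlib

section
/- Let c > 0. There exists a constant K > 0 depending only on c such that the following holds: for every sequence ε_1, ε_2, … of i.i.d. centered real random variables, each sub-Gaussian with parameter c, every pair of integers 1 ≤ l ≤ u, and every real m ≥ 2, P( max_{l ≤ ℓ ≤ u} (√l / ℓ) · |S_ℓ| ≥ K √(log m) ) ≤ 4 / m², where S_ℓ = ∑_{t=1}^{ℓ} ε_t. (Dyadic maximal inequality from the proof of Proposition 2.1(a), underlying the rate ω_n^{(1)} ≍ √(log q_n).) -/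
open Finset MeasureTheory ProbabilityTheory

/-- `X` is sub-Gaussian with parameter `c` (cf. Mathlib's `HasSubgaussianMGF`):
for every `t : ℝ`, `exp (t * X)` is integrable and `E[exp (t * X)] ≤ exp (c * t² / 2)`. -/
def IsSubGaussianMGF {Ω : Type*} [MeasurableSpace Ω] (μ : Measure Ω)
    (X : Ω → ℝ) (c : ℝ) : Prop :=
  ∀ t : ℝ, Integrable (fun ω => Real.exp (t * X ω)) μ ∧
    ∫ ω, Real.exp (t * X ω) ∂μ ≤ Real.exp (c * t ^ 2 / 2)

section Auxiliary

open Real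

section Aux

variable {Ω : Type*} [MeasurableSpace Ω] {μ : Measure Ω} [IsProbabilityMeasure μ]

omit [IsProbabilityMeasure μ] in
lemma integrable_of_exp {Y : Ω → ℝ} (hm : Measurable Y)
    (h1 : Integrable (fun ω => Real.exp (Y ω)) μ)
    (h2 : Integrable (fun ω => Real.exp (-Y ω)) μ) : Integrable Y μ := by
  refine Integrable.mono' (h1.add h2) hm.aestronglyMeasurable ?_
  filter_upwards with ω
  have hy1 : Y ω ≤ Real.exp (Y ω) := (Real.add_one_le_exp _).trans' (by linarith)
  have hy2 : -Y ω ≤ Real.exp (-Y ω) := (Real.add_one_le_exp _).trans' (by linarith)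
  have := Real.exp_pos (Y ω)
  have := Real.exp_pos (-Y ω)
  rw [Real.norm_eq_abs, abs_le, Pi.add_apply]
  constructor <;> nlinarith

lemma one_le_integral_exp {Y : Ω → ℝ} {t : ℝ} (hY : Integrable Y μ)
    (hint : Integrable (fun ω => Real.exp (t * Y ω)) μ)
    (hmean : ∫ ω, Y ω ∂μ = 0) : 1 ≤ ∫ ω, Real.exp (t * Y ω) ∂μ := by
  have h : ∫ ω, (t * Y ω + 1) ∂μ ≤ ∫ ω, Real.exp (t * Y ω) ∂μ := by
    refine integral_mono ((hY.const_mul t).add (integrable_const 1)) hint fun ω => ?_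
    simpa [add_comm] using Real.add_one_le_exp (t * Y ω)
  have : ∫ ω, (t * Y ω + 1) ∂μ = 1 := by
    rw [integral_add (hY.const_mul t) (integrable_const 1), MeasureTheory.integral_const_mul, hmean]
    simp
  linarith

end Aux

/-- One-sided maximal Chernoff bound for sums of independent sub-Gaussian variables. -/
lemma max_chernoff {Ω : Type*} [MeasurableSpace Ω] (μ : Measure Ω) [IsProbabilityMeasure μ]
    {c : ℝ} (hc : 0 < c) (X : ℕ → Ω → ℝ) (hXm : ∀ i, Measurable (X i))
    (hind : iIndepFun X μ)
    (hmgf : ∀ i (t : ℝ), Integrable (fun ω => Real.exp (t * X i ω)) μ ∧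
      ∫ ω, Real.exp (t * X i ω) ∂μ ≤ Real.exp (c * t ^ 2 / 2))
    (hmean : ∀ i, ∫ ω, X i ω ∂μ = 0)
    (n : ℕ) (hn : 1 ≤ n) {a : ℝ} (ha : 0 ≤ a) :
    μ {ω | ∃ j, 1 ≤ j ∧ j ≤ n ∧ a ≤ ∑ i ∈ Finset.range j, X i ω}
      ≤ ENNReal.ofReal (Real.exp (-(a ^ 2) / (2 * c * n))) := by
  classical
  set S : ℕ → Ω → ℝ := fun j ω => ∑ i ∈ Finset.range j, X i ω with hSdef
  have hSmeas : ∀ j, Measurable (S j) := fun j =>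
    Finset.measurable_sum _ fun i _ => hXm i
  -- basic integrability facts
  have hXint : ∀ i, Integrable (X i) μ := fun i =>
    integrable_of_exp (hXm i) (by simpa using (hmgf i 1).1) (by simpa using (hmgf i (-1)).1)
  have hexp_int : ∀ (s : Finset ℕ) (t : ℝ),
      Integrable (fun ω => Real.exp (t * ∑ i ∈ s, X i ω)) μ := by
    intro s t
    have := hind.integrable_exp_mul_sum hXm (s := s) (fun i _ => (hmgf i t).1)
    simpa [Finset.sum_apply] using this
  have hmgf_sum : ∀ (N : ℕ) (t : ℝ),
      ∫ ω, Real.exp (t * S N ω) ∂μ ≤ Real.exp (c * N * t ^ 2 / 2) := by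
    intro N t
    have h1 : mgf (∑ i ∈ Finset.range N, X i) μ t = ∏ i ∈ Finset.range N, mgf (X i) μ t :=
      hind.mgf_sum hXm (Finset.range N)
    have h2 : ∏ i ∈ Finset.range N, mgf (X i) μ t
        ≤ ∏ _i ∈ Finset.range N, Real.exp (c * t ^ 2 / 2) := by
      refine Finset.prod_le_prod (fun i _ => mgf_nonneg) (fun i _ => ?_)
      simpa [mgf] using (hmgf i t).2
    have h3 : ∫ ω, Real.exp (t * S N ω) ∂μ = mgf (∑ i ∈ Finset.range N, X i) μ t := by
      simp [mgf, hSdef, Finset.sum_apply]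
    rw [h3, h1]
    refine h2.trans ?_
    rw [Finset.prod_const, ← Real.exp_nat_mul]
    apply Real.exp_le_exp.mpr
    rw [Finset.card_range]
    ring_nf
    exact le_refl _
  -- the event and its first-hitting decomposition
  set B : ℕ → Set Ω := fun j =>
    {ω | a ≤ S j ω} ∩ ⋂ (i : ℕ) (_ : 1 ≤ i) (_ : i < j), {ω | S i ω < a} with hBdef
  have hBmem : ∀ j ω, ω ∈ B j ↔ a ≤ S j ω ∧ ∀ i, 1 ≤ i → i < j → S i ω < a := by
    intro j ω
    simp [hBdef, Set.mem_iInter]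
  have hBmeas : ∀ j, MeasurableSet (B j) := by
    intro j
    exact (measurableSet_le measurable_const (hSmeas j)).inter
      (MeasurableSet.iInter fun i => MeasurableSet.iInter fun _ => MeasurableSet.iInter fun _ =>
        measurableSet_lt (hSmeas i) measurable_const)
  have hEvent : {ω | ∃ j, 1 ≤ j ∧ j ≤ n ∧ a ≤ S j ω} = ⋃ j ∈ Finset.Icc 1 n, B j := by
    ext ω
    simp only [Set.mem_setOf_eq, Set.mem_iUnion, Finset.mem_Icc, exists_prop]
    constructor
    · rintro ⟨j, hj1, hjn, hja⟩
      have hex : ∃ k, 1 ≤ k ∧ k ≤ n ∧ a ≤ S k ω := ⟨j, hj1, hjn, hja⟩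
      obtain ⟨hk1, hkn, hka⟩ := Nat.find_spec hex
      refine ⟨Nat.find hex, ⟨hk1, hkn⟩, (hBmem _ ω).2 ⟨hka, ?_⟩⟩
      intro i h1i hik
      have h := Nat.find_min hex hik
      push_neg at h
      exact h h1i (hik.le.trans hkn)
    · rintro ⟨k, ⟨hk1, hkn⟩, hk⟩
      exact ⟨k, hk1, hkn, ((hBmem k ω).1 hk).1⟩
  have hBdisj : (↑(Finset.Icc 1 n) : Set ℕ).PairwiseDisjoint B := by
    intro j hj k hk hjk
    simp only [Finset.coe_Icc, Set.mem_Icc] at hj hk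
    have key : ∀ j' k', 1 ≤ j' → j' < k' → Disjoint (B j') (B k') := by
      intro j' k' h1 hlt
      rw [Set.disjoint_left]
      intro ω hωj hωk
      have h2 := ((hBmem k' ω).1 hωk).2 j' h1 hlt
      have h3 := ((hBmem j' ω).1 hωj).1
      linarith
    rcases lt_or_gt_of_ne hjk with h | h
    · exact key j k hj.1 h
    · exact (key k j hk.1 h).symm
  -- the per-block key estimate with a generic nonnegative lam
  have key : ∀ lam : ℝ, 0 ≤ lam →
      μ {ω | ∃ j, 1 ≤ j ∧ j ≤ n ∧ a ≤ S j ω}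
        ≤ ENNReal.ofReal (Real.exp (c * n * lam ^ 2 / 2 - lam * a)) := by
    intro lam hlam
    have keyj : ∀ j, 1 ≤ j → j ≤ n →
        Real.exp (lam * a) * (μ (B j)).toReal
          ≤ ∫ ω in B j, Real.exp (lam * S n ω) ∂μ := by
      intro j hj1 hjn
      set T : Ω → ℝ := fun ω => ∑ i ∈ Finset.Ico j n, X i ω with hTdef
      have hST : ∀ ω, S j ω + T ω = S n ω := by
        intro ω
        simpa [hSdef, hTdef, ← Nat.Ico_zero_eq_range] using
          Finset.sum_Ico_consecutive (fun i => X i ω) (Nat.zero_le j) hjn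
      -- independence of the indicator part and the future part
      have hdisjST : Disjoint (Finset.range j) (Finset.Ico j n) := by
        simp only [Finset.disjoint_left, Finset.mem_range, Finset.mem_Ico]
        omega
      have hpair := hind.indepFun_finset (Finset.range j) (Finset.Ico j n) hdisjST hXm
      set pS : ℕ → ({x // x ∈ Finset.range j} → ℝ) → ℝ :=
        fun i v => ∑ t ∈ (Finset.range j).attach, if (t : ℕ) < i then v t else 0 with hpSdef
      have hpSmeas : ∀ i, Measurable (pS i) := by
        intro i
        refine Finset.measurable_sum _ fun t _ => ?_
        by_cases h : (t : ℕ) < i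
        · simpa [h] using measurable_pi_apply t
        · simpa [h] using measurable_const
      have hpSeq : ∀ i, i ≤ j → ∀ ω, pS i (fun t => X (↑t) ω) = S i ω := by
        intro i hij ω
        rw [hpSdef]
        simp only
        rw [Finset.sum_attach (Finset.range j) (fun t => if t < i then X t ω else 0),
          ← Finset.sum_filter]
        congr 1
        ext t
        simp only [Finset.mem_filter, Finset.mem_range]
        omega
      set Gset : Set ({x // x ∈ Finset.range j} → ℝ) :=
        {v | a ≤ pS j v} ∩ ⋂ (i : ℕ) (_ : 1 ≤ i) (_ : i < j), {v | pS i v < a} with hGsetdef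
      have hGsetmeas : MeasurableSet Gset :=
        (measurableSet_le measurable_const (hpSmeas j)).inter
          (MeasurableSet.iInter fun i => MeasurableSet.iInter fun _ =>
            MeasurableSet.iInter fun _ => measurableSet_lt (hpSmeas i) measurable_const)
      set G : ({x // x ∈ Finset.range j} → ℝ) → ℝ :=
        fun v => Gset.indicator (fun v => Real.exp (lam * pS j v)) v with hGdef
      have hGmeas : Measurable G :=
        Measurable.indicator ((hpSmeas j).const_mul lam).exp hGsetmeas
      set H : ({x // x ∈ Finset.Ico j n} → ℝ) → ℝ :=
        fun w => Real.exp (lam * ∑ t ∈ (Finset.Ico j n).attach, w t) with hHdef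
      have hHmeas : Measurable H :=
        ((Finset.measurable_sum _ fun t _ => measurable_pi_apply t).const_mul lam).exp
      set g : Ω → ℝ := fun ω => (B j).indicator (fun ω => Real.exp (lam * S j ω)) ω with hgdef
      set h : Ω → ℝ := fun ω => Real.exp (lam * T ω) with hhdef
      have hmemGB : ∀ ω, ((fun t : {x // x ∈ Finset.range j} => X (↑t) ω) ∈ Gset) ↔ ω ∈ B j := by
        intro ω
        rw [hBmem]
        simp only [hGsetdef, Set.mem_inter_iff, Set.mem_iInter, Set.mem_setOf_eq]
        constructor
        · rintro ⟨h1, h2⟩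
          refine ⟨by rwa [hpSeq j le_rfl] at h1, fun i h1i hij => ?_⟩
          have := h2 i h1i hij
          rwa [hpSeq i hij.le] at this
        · rintro ⟨h1, h2⟩
          refine ⟨by rwa [hpSeq j le_rfl], fun i h1i hij => ?_⟩
          rw [hpSeq i hij.le]
          exact h2 i h1i hij
      have hgG : g = G ∘ (fun ω (i : {x // x ∈ Finset.range j}) => X (↑i) ω) := by
        funext ω
        simp only [Function.comp_apply, hGdef, hgdef]
        by_cases hω : ω ∈ B j
        · rw [Set.indicator_of_mem hω, Set.indicator_of_mem ((hmemGB ω).2 hω),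
            hpSeq j le_rfl]
        · rw [Set.indicator_of_notMem hω,
            Set.indicator_of_notMem (fun hmem => hω ((hmemGB ω).1 hmem))]
      have hhH : h = H ∘ (fun ω (i : {x // x ∈ Finset.Ico j n}) => X (↑i) ω) := by
        funext ω
        simp only [Function.comp_apply, hHdef, hhdef, hTdef]
        rw [Finset.sum_attach (Finset.Ico j n) (fun t => X t ω)]
      have hgh_indep : IndepFun g h μ := by
        rw [hgG, hhH]
        exact hpair.comp hGmeas hHmeas
      -- integrability
      have hSj_int : Integrable (fun ω => Real.exp (lam * S j ω)) μ := hexp_int _ lam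
      have hg_int : Integrable g μ := hSj_int.indicator (hBmeas j)
      have hh_int : Integrable h μ := hexp_int _ lam
      have hT_int : Integrable T μ := integrable_finset_sum _ fun i _ => hXint i
      have hT_mean : ∫ ω, T ω ∂μ = 0 := by
        rw [hTdef]
        rw [integral_finset_sum _ fun i _ => hXint i]
        simp [hmean]
      have hh_lb : 1 ≤ ∫ ω, h ω ∂μ := one_le_integral_exp hT_int hh_int hT_mean
      have hg_nonneg : 0 ≤ ∫ ω, g ω ∂μ := by
        refine integral_nonneg fun ω => ?_
        exact Set.indicator_nonneg (fun ω _ => (Real.exp_pos _).le) ω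
      have hprod : ∫ ω, (g ω * h ω) ∂μ = (∫ ω, g ω ∂μ) * ∫ ω, h ω ∂μ := by
        have := hgh_indep.integral_mul_eq_mul_integral hg_int.aestronglyMeasurable hh_int.aestronglyMeasurable
        simpa [Pi.mul_apply] using this
      have hgh_eq : ∀ ω, g ω * h ω = (B j).indicator (fun ω => Real.exp (lam * S n ω)) ω := by
        intro ω
        by_cases hω : ω ∈ B j
        · rw [hgdef]
          simp only [Set.indicator_of_mem hω, hhdef]
          rw [← Real.exp_add, ← mul_add, hST ω]
        · simp [hgdef, Set.indicator_of_notMem hω]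
      have hg_lb : Real.exp (lam * a) * (μ (B j)).toReal ≤ ∫ ω, g ω ∂μ := by
        rw [hgdef, integral_indicator (hBmeas j)]
        refine (show Real.exp (lam * a) * (μ (B j)).toReal = μ.real (B j) • Real.exp (lam * a) by
          rw [smul_eq_mul, measureReal_def, mul_comm]).trans_le
          (setIntegral_ge_of_const_le (hBmeas j) (measure_ne_top μ _) (fun ω hω => ?_)
          (hSj_int.integrableOn))
        have haS : a ≤ S j ω := ((hBmem j ω).1 hω).1
        exact Real.exp_le_exp.mpr (mul_le_mul_of_nonneg_left haS hlam)
      calc Real.exp (lam * a) * (μ (B j)).toReal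
          ≤ ∫ ω, g ω ∂μ := hg_lb
        _ ≤ (∫ ω, g ω ∂μ) * ∫ ω, h ω ∂μ := le_mul_of_one_le_right hg_nonneg hh_lb
        _ = ∫ ω, (g ω * h ω) ∂μ := hprod.symm
        _ = ∫ ω, (B j).indicator (fun ω => Real.exp (lam * S n ω)) ω ∂μ := by
            congr 1; funext ω; exact hgh_eq ω
        _ = ∫ ω in B j, Real.exp (lam * S n ω) ∂μ := integral_indicator (hBmeas j)
    -- sum the per-block estimates
    have hSn_int : Integrable (fun ω => Real.exp (lam * S n ω)) μ := hexp_int _ lam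
    have hmeasE : μ {ω | ∃ j, 1 ≤ j ∧ j ≤ n ∧ a ≤ S j ω}
        = ∑ j ∈ Finset.Icc 1 n, μ (B j) := by
      rw [hEvent]
      exact measure_biUnion_finset hBdisj fun j _ => hBmeas j
    have htoReal : (μ {ω | ∃ j, 1 ≤ j ∧ j ≤ n ∧ a ≤ S j ω}).toReal
        = ∑ j ∈ Finset.Icc 1 n, (μ (B j)).toReal := by
      rw [hmeasE, ENNReal.toReal_sum fun j _ => measure_ne_top μ _]
    have hsum : Real.exp (lam * a) * (μ {ω | ∃ j, 1 ≤ j ∧ j ≤ n ∧ a ≤ S j ω}).toReal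
        ≤ Real.exp (c * n * lam ^ 2 / 2) := by
      rw [htoReal, Finset.mul_sum]
      calc ∑ j ∈ Finset.Icc 1 n, Real.exp (lam * a) * (μ (B j)).toReal
          ≤ ∑ j ∈ Finset.Icc 1 n, ∫ ω in B j, Real.exp (lam * S n ω) ∂μ := by
            refine Finset.sum_le_sum fun j hj => ?_
            rw [Finset.mem_Icc] at hj
            exact keyj j hj.1 hj.2
        _ = ∫ ω in ⋃ j ∈ Finset.Icc 1 n, B j, Real.exp (lam * S n ω) ∂μ := by
            rw [integral_biUnion_finset _ (fun j _ => hBmeas j) hBdisj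
              (fun j _ => hSn_int.integrableOn)]
        _ ≤ ∫ ω, Real.exp (lam * S n ω) ∂μ := by
            refine setIntegral_le_integral hSn_int ?_
            filter_upwards with ω using (Real.exp_pos _).le
        _ ≤ Real.exp (c * n * lam ^ 2 / 2) := hmgf_sum n lam
    have hfin : μ {ω | ∃ j, 1 ≤ j ∧ j ≤ n ∧ a ≤ S j ω} ≠ ⊤ := measure_ne_top μ _
    have htR : (μ {ω | ∃ j, 1 ≤ j ∧ j ≤ n ∧ a ≤ S j ω}).toReal
        ≤ Real.exp (c * n * lam ^ 2 / 2 - lam * a) := by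
      rw [Real.exp_sub, le_div_iff₀ (Real.exp_pos _), mul_comm]
      exact hsum
    calc μ {ω | ∃ j, 1 ≤ j ∧ j ≤ n ∧ a ≤ S j ω}
        = ENNReal.ofReal (μ {ω | ∃ j, 1 ≤ j ∧ j ≤ n ∧ a ≤ S j ω}).toReal :=
          (ENNReal.ofReal_toReal hfin).symm
      _ ≤ ENNReal.ofReal (Real.exp (c * n * lam ^ 2 / 2 - lam * a)) :=
          ENNReal.ofReal_le_ofReal htR
  -- optimize lam
  have hcn : (0 : ℝ) < c * n := by
    have : (1 : ℝ) ≤ (n : ℝ) := by exact_mod_cast hn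
    positivity
  have := key (a / (c * n)) (by positivity)
  convert this using 3
  field_simp
  ring

/-- Two-sided maximal Chernoff bound. -/
lemma max_chernoff_abs {Ω : Type*} [MeasurableSpace Ω] (μ : Measure Ω) [IsProbabilityMeasure μ]
    {c : ℝ} (hc : 0 < c) (X : ℕ → Ω → ℝ) (hXm : ∀ i, Measurable (X i))
    (hind : iIndepFun X μ)
    (hmgf : ∀ i (t : ℝ), Integrable (fun ω => Real.exp (t * X i ω)) μ ∧
      ∫ ω, Real.exp (t * X i ω) ∂μ ≤ Real.exp (c * t ^ 2 / 2))
    (hmean : ∀ i, ∫ ω, X i ω ∂μ = 0)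
    (n : ℕ) (hn : 1 ≤ n) {a : ℝ} (ha : 0 ≤ a) :
    μ {ω | ∃ j, 1 ≤ j ∧ j ≤ n ∧ a ≤ |∑ i ∈ Finset.range j, X i ω|}
      ≤ ENNReal.ofReal (2 * Real.exp (-(a ^ 2) / (2 * c * n))) := by
  set X' : ℕ → Ω → ℝ := fun i ω => -X i ω with hX'def
  have hXm' : ∀ i, Measurable (X' i) := fun i => (hXm i).neg
  have hind' : iIndepFun X' μ :=
    hind.comp (fun _ => fun x : ℝ => -x) (fun _ => measurable_neg)
  have hmgf' : ∀ i (t : ℝ), Integrable (fun ω => Real.exp (t * X' i ω)) μ ∧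
      ∫ ω, Real.exp (t * X' i ω) ∂μ ≤ Real.exp (c * t ^ 2 / 2) := by
    intro i t
    have h := hmgf i (-t)
    constructor
    · have := h.1
      simpa [hX'def, mul_neg, neg_mul] using this
    · have := h.2
      rw [show c * (-t) ^ 2 / 2 = c * t ^ 2 / 2 by ring] at this
      simpa [hX'def, mul_neg, neg_mul] using this
  have hmean' : ∀ i, ∫ ω, X' i ω ∂μ = 0 := by
    intro i
    rw [hX'def]
    simp only
    rw [integral_neg, hmean i, neg_zero]
  have h1 := max_chernoff μ hc X hXm hind hmgf hmean n hn ha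
  have h2 := max_chernoff μ hc X' hXm' hind' hmgf' hmean' n hn ha
  have hsub : {ω | ∃ j, 1 ≤ j ∧ j ≤ n ∧ a ≤ |∑ i ∈ Finset.range j, X i ω|}
      ⊆ {ω | ∃ j, 1 ≤ j ∧ j ≤ n ∧ a ≤ ∑ i ∈ Finset.range j, X i ω}
        ∪ {ω | ∃ j, 1 ≤ j ∧ j ≤ n ∧ a ≤ ∑ i ∈ Finset.range j, X' i ω} := by
    rintro ω ⟨j, hj1, hjn, hja⟩
    rcases le_abs.mp hja with h | h
    · exact Or.inl ⟨j, hj1, hjn, h⟩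
    · refine Or.inr ⟨j, hj1, hjn, ?_⟩
      rw [hX'def]
      simpa [Finset.sum_neg_distrib] using h
  calc μ {ω | ∃ j, 1 ≤ j ∧ j ≤ n ∧ a ≤ |∑ i ∈ Finset.range j, X i ω|}
      ≤ μ ({ω | ∃ j, 1 ≤ j ∧ j ≤ n ∧ a ≤ ∑ i ∈ Finset.range j, X i ω}
        ∪ {ω | ∃ j, 1 ≤ j ∧ j ≤ n ∧ a ≤ ∑ i ∈ Finset.range j, X' i ω}) := measure_mono hsub
    _ ≤ μ {ω | ∃ j, 1 ≤ j ∧ j ≤ n ∧ a ≤ ∑ i ∈ Finset.range j, X i ω}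
        + μ {ω | ∃ j, 1 ≤ j ∧ j ≤ n ∧ a ≤ ∑ i ∈ Finset.range j, X' i ω} := measure_union_le _ _
    _ ≤ ENNReal.ofReal (Real.exp (-(a ^ 2) / (2 * c * n)))
        + ENNReal.ofReal (Real.exp (-(a ^ 2) / (2 * c * n))) := add_le_add h1 h2
    _ = ENNReal.ofReal (2 * Real.exp (-(a ^ 2) / (2 * c * n))) := by
        rw [← ENNReal.ofReal_add (Real.exp_pos _).le (Real.exp_pos _).le]
        congr 1
        ring

theorem subGaussian_dyadic_maximal_bound' (c : ℝ) (hc : 0 < c) :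
    ∃ K : ℝ, 0 < K ∧
      ∀ (Ω : Type*) (_ : MeasurableSpace Ω) (μ : Measure Ω), IsProbabilityMeasure μ →
        ∀ (ε : ℕ → Ω → ℝ),
          (∀ i, Measurable (ε i)) →
          iIndepFun (fun i : ℕ => ε (i + 1)) μ →
          (∀ i : ℕ, 1 ≤ i → IdentDistrib (ε i) (ε 1) μ μ) →
          (∀ i : ℕ, 1 ≤ i → ∫ ω, ε i ω ∂μ = 0) →
          (∀ i : ℕ, 1 ≤ i → (∀ t : ℝ, Integrable (fun ω => Real.exp (t * ε i ω)) μ ∧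
            ∫ ω, Real.exp (t * ε i ω) ∂μ ≤ Real.exp (c * t ^ 2 / 2))) →
          ∀ (l u : ℕ), 1 ≤ l → l ≤ u → ∀ m : ℝ, 2 ≤ m →
            μ {ω | ∃ ℓ : ℕ, l ≤ ℓ ∧ ℓ ≤ u ∧
                K * Real.sqrt (Real.log m) ≤
                  (Real.sqrt l / ℓ) * |∑ t ∈ Finset.Icc 1 ℓ, ε t ω|}
              ≤ ENNReal.ofReal (4 / m ^ 2) := by
  refine ⟨Real.sqrt (8 * c), Real.sqrt_pos.mpr (by linarith), ?_⟩
  intro Ω mΩ μ hμ ε hεm hindep _hident hmeanε hsub l u hl hlu m hm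
  set X : ℕ → Ω → ℝ := fun i => ε (i + 1) with hXdef
  have hXm : ∀ i, Measurable (X i) := fun i => hεm (i + 1)
  have hmgfX : ∀ i (t : ℝ), Integrable (fun ω => Real.exp (t * X i ω)) μ ∧
      ∫ ω, Real.exp (t * X i ω) ∂μ ≤ Real.exp (c * t ^ 2 / 2) :=
    fun i t => hsub (i + 1) (Nat.le_add_left 1 i) t
  have hmeanX : ∀ i, ∫ ω, X i ω ∂μ = 0 := fun i => hmeanε (i + 1) (Nat.le_add_left 1 i)
  have hsum_eq : ∀ (ℓ : ℕ) (ω : Ω),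
      ∑ t ∈ Finset.Icc 1 ℓ, ε t ω = ∑ i ∈ Finset.range ℓ, X i ω := by
    intro ℓ ω
    rw [show Finset.Icc 1 ℓ = Finset.Ico 1 (ℓ + 1) by rw [Finset.Ico_add_one_right_eq_Icc],
      Finset.sum_Ico_eq_sum_range]
    simp [hXdef, add_comm]
  have hm0 : (0 : ℝ) < m := by linarith
  have hL : 0 < Real.log m := Real.log_pos (by linarith)
  set a : ℝ := Real.sqrt (8 * c) * Real.sqrt (Real.log m) with hadef
  have ha2 : a ^ 2 = 8 * c * Real.log m := by
    rw [hadef, mul_pow, Real.sq_sqrt (by linarith), Real.sq_sqrt hL.le]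
  set E : ℕ → Set Ω := fun k => {ω | ∃ j, 1 ≤ j ∧ j ≤ min u (l * 2 ^ (k + 1)) ∧
      a * (Real.sqrt l * 2 ^ k) ≤ |∑ i ∈ Finset.range j, X i ω|} with hEdef
  -- inclusion into the union of dyadic blocks
  have hincl : {ω | ∃ ℓ : ℕ, l ≤ ℓ ∧ ℓ ≤ u ∧
      a ≤ (Real.sqrt l / ℓ) * |∑ t ∈ Finset.Icc 1 ℓ, ε t ω|} ⊆ ⋃ k, E k := by
    intro ω hω
    obtain ⟨ℓ, hlℓ, hℓu, hbound⟩ := hω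
    set k := Nat.log 2 (ℓ / l) with hk
    have hll : 1 ≤ ℓ := le_trans hl hlℓ
    have h2k : 2 ^ k ≤ ℓ / l := Nat.pow_log_le_self 2 (by
      have : 1 ≤ ℓ / l := Nat.one_le_div_iff (by omega) |>.mpr hlℓ
      omega)
    have hlow : l * 2 ^ k ≤ ℓ :=
      le_trans (Nat.mul_le_mul_left l h2k) (Nat.mul_div_le ℓ l)
    have hup : ℓ ≤ l * 2 ^ (k + 1) := by
      have h1 : ℓ / l < 2 ^ (k + 1) := Nat.lt_pow_succ_log_self (by norm_num) _
      have h2 : ℓ < l * (ℓ / l) + l := by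
        have h3 := Nat.div_add_mod ℓ l
        have h4 := Nat.mod_lt ℓ (show 0 < l by omega)
        omega
      calc ℓ ≤ l * (ℓ / l + 1) := by rw [Nat.mul_add, Nat.mul_one]; omega
        _ ≤ l * 2 ^ (k + 1) := Nat.mul_le_mul_left l (by omega)
    refine Set.mem_iUnion.mpr ⟨k, ℓ, hll, le_min hℓu hup, ?_⟩
    rw [hsum_eq ℓ ω] at hbound
    set A : ℝ := |∑ i ∈ Finset.range ℓ, X i ω| with hA
    have hsl : (0 : ℝ) < Real.sqrt l := Real.sqrt_pos.mpr (by exact_mod_cast Nat.pos_of_ne_zero (by omega))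
    have hℓR : (0 : ℝ) < (ℓ : ℝ) := by exact_mod_cast hll
    have hb' : a * (ℓ : ℝ) ≤ Real.sqrt l * A := by
      rw [div_mul_eq_mul_div, le_div_iff₀ hℓR] at hbound
      exact hbound
    have hcast : (l : ℝ) * 2 ^ k ≤ (ℓ : ℝ) := by
      have := (Nat.cast_le (α := ℝ)).mpr hlow
      push_cast at this
      exact this
    have hsl2 : Real.sqrt l * Real.sqrt l = (l : ℝ) :=
      Real.mul_self_sqrt (Nat.cast_nonneg l)
    have ha0 : 0 ≤ a := by positivity
    have h1 : a * ((l : ℝ) * 2 ^ k) ≤ a * (ℓ : ℝ) := mul_le_mul_of_nonneg_left hcast ha0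
    have h2 : a * ((l : ℝ) * 2 ^ k) = (a * (Real.sqrt l * 2 ^ k)) * Real.sqrt l := by
      linear_combination (-(a * (2 : ℝ) ^ k)) * hsl2
    refine le_of_mul_le_mul_right ?_ hsl
    rw [← h2]
    calc a * ((l : ℝ) * 2 ^ k) ≤ a * (ℓ : ℝ) := h1
      _ ≤ Real.sqrt l * A := hb'
      _ = A * Real.sqrt l := mul_comm _ _
  -- per-block bound
  have hEk : ∀ k : ℕ, μ (E k)
      ≤ ENNReal.ofReal (2 * Real.exp (-(2 * ((k : ℝ) + 1)) * Real.log m)) := by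
    intro k
    have h2pow : 1 ≤ 2 ^ (k + 1) := Nat.one_le_two_pow
    have hn1 : 1 ≤ min u (l * 2 ^ (k + 1)) := le_min (hl.trans hlu) (by
      calc 1 = 1 * 1 := (one_mul 1).symm
        _ ≤ l * 2 ^ (k + 1) := Nat.mul_le_mul hl h2pow)
    have hb0 : (0 : ℝ) ≤ a * (Real.sqrt l * 2 ^ k) := by positivity
    have hmain := max_chernoff_abs μ hc X hXm hindep hmgfX hmeanX
      (min u (l * 2 ^ (k + 1))) hn1 hb0
    refine hmain.trans (ENNReal.ofReal_le_ofReal ?_)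
    have hn0 : (0 : ℝ) < ((min u (l * 2 ^ (k + 1)) : ℕ) : ℝ) := by exact_mod_cast hn1
    have hnle : ((min u (l * 2 ^ (k + 1)) : ℕ) : ℝ) ≤ (l : ℝ) * 2 ^ (k + 1) := by
      push_cast
      exact inf_le_right
    have hb2 : (a * (Real.sqrt l * 2 ^ k)) ^ 2
        = 8 * c * Real.log m * ((l : ℝ) * ((2 : ℝ) ^ k) ^ 2) := by
      rw [mul_pow, mul_pow, mul_pow, Real.sq_sqrt (show (0:ℝ) ≤ 8 * c by linarith),
        Real.sq_sqrt hL.le, Real.sq_sqrt (Nat.cast_nonneg l)]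
    refine mul_le_mul_of_nonneg_left (Real.exp_le_exp.mpr ?_) (by norm_num)
    rw [neg_div, neg_mul, neg_le_neg_iff, hb2,
      le_div_iff₀ (by positivity)]
    have hk2 : ((k : ℝ) + 1) ≤ (2 : ℝ) ^ k := by
      have := Nat.lt_two_pow_self (n := k)
      exact_mod_cast this
    have hl1 : (1 : ℝ) ≤ (l : ℝ) := by exact_mod_cast hl
    have hp : (0 : ℝ) < (2 : ℝ) ^ k := by positivity
    have e1 : (2 : ℝ) ^ (k + 1) = 2 * 2 ^ k := by ring
    nlinarith [mul_le_mul_of_nonneg_left hnle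
        (by positivity : (0 : ℝ) ≤ 4 * c * Real.log m * ((k : ℝ) + 1)),
      mul_le_mul_of_nonneg_left hk2
        (by positivity : (0 : ℝ) ≤ 8 * c * Real.log m * (l : ℝ) * (2 : ℝ) ^ k)]
  -- geometric summation
  set r : ℝ := (m ^ 2)⁻¹ with hrdef
  have hr0 : 0 ≤ r := by positivity
  have hm4 : (4 : ℝ) ≤ m ^ 2 := by nlinarith
  have hr4 : r ≤ 1 / 4 := by
    rw [hrdef]
    rw [inv_le_comm₀ (by positivity) (by norm_num)]
    linarith
  have hr1 : r < 1 := lt_of_le_of_lt hr4 (by norm_num)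
  have hre : ∀ k : ℕ, Real.exp (-(2 * ((k : ℝ) + 1)) * Real.log m) = r ^ (k + 1) := by
    intro k
    rw [show (-(2 * ((k : ℝ) + 1)) * Real.log m)
        = ((k + 1 : ℕ) : ℝ) * (-2 * Real.log m) by push_cast; ring,
      Real.exp_nat_mul]
    congr 1
    rw [show (-2 * Real.log m) = -Real.log m + -Real.log m by ring, Real.exp_add,
      Real.exp_neg, Real.exp_log hm0, hrdef, sq, mul_inv]
  have hsummable : Summable (fun k : ℕ => 2 * r * r ^ k) :=
    (summable_geometric_of_lt_one hr0 hr1).mul_left _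
  have htsum : ∑' k : ℕ, 2 * r * r ^ k = 2 * r * (1 - r)⁻¹ := by
    rw [tsum_mul_left, tsum_geometric_of_lt_one hr0 hr1]
  have hfinal : 2 * r * (1 - r)⁻¹ ≤ 4 / m ^ 2 := by
    have hinv : (1 - r)⁻¹ ≤ 2 := by
      rw [show (2 : ℝ) = (1 / 2 : ℝ)⁻¹ by norm_num]
      exact inv_anti₀ (by norm_num) (by linarith)
    have h4r : 4 / m ^ 2 = 4 * r := by rw [hrdef]; ring
    rw [h4r]
    nlinarith
  calc μ {ω | ∃ ℓ : ℕ, l ≤ ℓ ∧ ℓ ≤ u ∧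
        a ≤ (Real.sqrt l / ℓ) * |∑ t ∈ Finset.Icc 1 ℓ, ε t ω|}
      ≤ μ (⋃ k, E k) := measure_mono hincl
    _ ≤ ∑' k : ℕ, μ (E k) := measure_iUnion_le _
    _ ≤ ∑' k : ℕ, ENNReal.ofReal (2 * r * r ^ k) := by
        refine ENNReal.tsum_le_tsum fun k => (hEk k).trans_eq ?_
        rw [hre k, pow_succ]
        ring_nf
    _ = ENNReal.ofReal (∑' k : ℕ, 2 * r * r ^ k) :=
        (ENNReal.ofReal_tsum_of_nonneg (fun k => by positivity) hsummable).symm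
    _ ≤ ENNReal.ofReal (4 / m ^ 2) := by
        rw [htsum]
        exact ENNReal.ofReal_le_ofReal hfinal

end Auxiliary

/-- Dyadic maximal inequality from the proof of Proposition 2.1(a): there is a
constant `K > 0` depending only on `c` such that for every sequence
`ε_1, ε_2, …` of i.i.d. centered sub-Gaussian (parameter `c`) random variables,
all integers `1 ≤ l ≤ u` and every real `m ≥ 2`,
`P( max_{l ≤ ℓ ≤ u} (√l/ℓ)|S_ℓ| ≥ K √(log m) ) ≤ 4/m²`, where `S_ℓ = ∑_{t=1}^ℓ ε_t`. -/
theorem subGaussian_dyadic_maximal_bound (c : ℝ) (hc : 0 < c) :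
    ∃ K : ℝ, 0 < K ∧
      ∀ (Ω : Type*) (_ : MeasurableSpace Ω) (μ : Measure Ω), IsProbabilityMeasure μ →
        ∀ (ε : ℕ → Ω → ℝ),
          (∀ i, Measurable (ε i)) →
          iIndepFun (fun i : ℕ => ε (i + 1)) μ →
          (∀ i : ℕ, 1 ≤ i → IdentDistrib (ε i) (ε 1) μ μ) →
          (∀ i : ℕ, 1 ≤ i → ∫ ω, ε i ω ∂μ = 0) →
          (∀ i : ℕ, 1 ≤ i → IsSubGaussianMGF μ (ε i) c) →
          ∀ (l u : ℕ), 1 ≤ l → l ≤ u → ∀ m : ℝ, 2 ≤ m →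
            μ {ω | ∃ ℓ : ℕ, l ≤ ℓ ∧ ℓ ≤ u ∧
                K * Real.sqrt (Real.log m) ≤
                  (Real.sqrt l / ℓ) * |∑ t ∈ Finset.Icc 1 ℓ, ε t ω|}
              ≤ ENNReal.ofReal (4 / m ^ 2) := by
  obtain ⟨K, hK, h⟩ := subGaussian_dyadic_maximal_bound' c hc
  exact ⟨K, hK, fun Ω mΩ μ hμ ε h1 h2 h3 h4 h5 =>
    h Ω mΩ μ hμ ε h1 h2 h3 h4 (fun i hi t => h5 i hi t)⟩
end

section
/- (Lemma B.1.) Let c_-, c_+, θ_-, θ, θ_+ be integers with θ_- < θ < θ_+ and c_- < θ < c_+, let μ, d_-, d_∘, d_+ be reals, and suppose that for all t ∈ {c_-+1, …, c_+} the signal satisfies f_t = μ + d_-·𝟙{t > θ_-} + d_∘·𝟙{t > θ} + d_+·𝟙{t > θ_+}. Set r_+ = max(0, c_+ − θ_+) and r_- = max(0, θ_- − c_-), and F_c = ∑_{t=c_-+1}^{c} (f_t − f̄_{(c_-+1):c_+}). Then: (1) for every integer c with max(c_-, θ_-) < c < θ one has F_c = −[(c−c_-)(c_+−θ)/(c_+−c_-)]·d_∘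 − [(c−c_-)/(c_+−c_-)]·d_+ r_+ − [(c_+−c)/(c_+−c_-)]·d_- r_-, and 𝒳_{c_-,c,c_+}(f) = −√((c−c_-)(c_+−c)/(c_+−c_-)) · [ (c_+−θ) d_∘/(c_+−c) + r_+ d_+/(c_+−c) + r_- d_- /(c−c_-) ]; (2) for every integer c with θ ≤ c < min(c_+, θ_+) one has F_c = −[(c_+−c)(θ−c_-)/(c_+−c_-)]·d_∘ − [(c−c_-)/(c_+−c_-)]·d_+ r_+ − [(c_+−c)/(c_+−c_-)]·d_- r_-, and 𝒳_{c_-,c,c_+}(f) = −√((c−c_-)(c_+−c)/(c_+−c_-)) · [ (θ−c_-) d_∘/(c−c_-) + r_+ d_+/(c_+−c) + r_- d_- /(c−c_-) ]. -/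
/-!
With `S c = ∑ t ∈ (c₋, c], f t`, the centered partial sum is `S c - (c - c₋) / (c₊ - c₋) * S c₊`
and the difference of the two segment means in the CUSUM statistic is
`(c₊ - c₋) / ((c - c₋) * (c₊ - c))` times it, so both are determined by `S c` and `S c₊`.
Each jump contributes to `S c` its size times the number of points of `(c₋, c]` beyond it; for
the `c` considered these counts are `c - c₋ - r₋`, `max (c - θ) 0` and `0`, and what remains is
field algebra.
-/

open Finset

/-- Mean of `f` over the integer interval `(s, e]`. -/
noncomputable def segMeanZ (f : ℤ → ℝ) (s e : ℤ) : ℝ :=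
  (∑ t ∈ Finset.Ioc s e, f t) / ((e : ℝ) - (s : ℝ))

noncomputable def cusumZ (f : ℤ → ℝ) (s b e : ℤ) : ℝ :=
  Real.sqrt (((b : ℝ) - s) * ((e : ℝ) - b) / ((e : ℝ) - s)) *
    (segMeanZ f s b - segMeanZ f b e)

lemma intCast_sub_ne_zero {x y : ℤ} (h : x < y) : (y : ℝ) - x ≠ 0 :=
  sub_ne_zero.2 (by exact_mod_cast h.ne')

lemma natCast_card_Ioc {s b : ℤ} (hsb : s ≤ b) : (#(Ioc s b) : ℝ) = b - s := by
  rw [Int.card_Ioc]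
  exact_mod_cast Int.toNat_of_nonneg (sub_nonneg.2 hsb)

lemma sum_Ioc_ite_lt (s e a : ℤ) (d : ℝ) :
    ∑ t ∈ Ioc s e, (if a < t then d else 0) = (max (e - max s a) 0 : ℤ) * d := by
  have h : (Ioc s e).filter (a < ·) = Ioc (max s a) e := by
    ext t
    simp only [mem_filter, mem_Ioc, max_lt_iff]
    omega
  rw [← sum_filter, h, sum_const, Int.card_Ioc, nsmul_eq_mul, ← Int.toNat_eq_max]
  norm_cast

lemma sum_Ioc_sub_const {s b : ℤ} (hsb : s ≤ b) (f : ℤ → ℝ) (m : ℝ) :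
    ∑ t ∈ Ioc s b, (f t - m) = ∑ t ∈ Ioc s b, f t - (b - s) * m := by
  rw [sum_sub_distrib, sum_const, nsmul_eq_mul, natCast_card_Ioc hsb]

lemma sum_Ioc_add_sum_Ioc {s b e : ℤ} (hsb : s ≤ b) (hbe : b ≤ e) (f : ℤ → ℝ) :
    ∑ t ∈ Ioc s b, f t + ∑ t ∈ Ioc b e, f t = ∑ t ∈ Ioc s e, f t := by
  rw [← sum_union (Ioc_disjoint_Ioc_of_le le_rfl), Ioc_union_Ioc_eq_Ioc hsb hbe]

lemma segMeanZ_sub_segMeanZ {s b e : ℤ} (hsb : s < b) (hbe : b < e) (f : ℤ → ℝ) :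
    segMeanZ f s b - segMeanZ f b e =
      (e - s) / ((b - s) * (e - b)) * ∑ t ∈ Ioc s b, (f t - segMeanZ f s e) := by
  have := intCast_sub_ne_zero hsb
  have := intCast_sub_ne_zero hbe
  have := intCast_sub_ne_zero (hsb.trans hbe)
  rw [sum_Ioc_sub_const hsb.le]
  unfold segMeanZ
  rw [← sum_Ioc_add_sum_Ioc hsb.le hbe.le]
  field_simp
  ring

lemma cusumZ_eq_of_sum_sub_segMeanZ {f : ℤ → ℝ} {s b e : ℤ} (hsb : s < b) (hbe : b < e) {B : ℝ}
    (h : ∑ t ∈ Ioc s b, (f t - segMeanZ f s e) = -((b - s) * (e - b) / (e - s)) * B) :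
    cusumZ f s b e = -√((b - s) * (e - b) / (e - s)) * B := by
  have := intCast_sub_ne_zero hsb
  have := intCast_sub_ne_zero hbe
  have := intCast_sub_ne_zero (hsb.trans hbe)
  rw [cusumZ, segMeanZ_sub_segMeanZ hsb hbe, h]
  field_simp

section ThreeChanges

variable {cm cp θm θ θp : ℤ} {μ dm d0 dp : ℝ} {f : ℤ → ℝ}

lemma sum_Ioc_of_three_changes
    (hf : ∀ t ∈ Ioc cm cp, f t = μ + (if θm < t then dm else 0) + (if θ < t then d0 else 0)
      + (if θp < t then dp else 0))
    {c : ℤ} (hcm : cm ≤ c) (hcp : c ≤ cp) :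
    ∑ t ∈ Ioc cm c, f t = (c - cm) * μ + (max (c - max cm θm) 0 : ℤ) * dm
      + (max (c - max cm θ) 0 : ℤ) * d0 + (max (c - max cm θp) 0 : ℤ) * dp := by
  rw [sum_congr rfl fun t ht => hf t (Ioc_subset_Ioc_right hcp ht)]
  simp only [sum_add_distrib, sum_Ioc_ite_lt, sum_const, nsmul_eq_mul, natCast_card_Ioc hcm]

lemma sum_Ioc_sub_segMeanZ_of_three_changes
    (hf : ∀ t ∈ Ioc cm cp, f t = μ + (if θm < t then dm else 0) + (if θ < t then d0 else 0)
      + (if θp < t then dp else 0))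
    (hcm : cm ≤ θ) (hcp : θ ≤ cp) {rp rm : ℤ} (hrp : rp = max 0 (cp - θp))
    (hrm : rm = max 0 (θm - cm)) {c : ℤ} (hc₁ : max cm θm < c) (hc₂ : c < min cp θp) :
    ∑ t ∈ Ioc cm c, (f t - segMeanZ f cm cp) =
      ((max (c - θ) 0 : ℤ) - (c - cm) * (cp - θ) / (cp - cm)) * d0
        - (c - cm) / (cp - cm) * (dp * rp) - (cp - c) / (cp - cm) * (dm * rm) := by
  have := intCast_sub_ne_zero (show cm < cp by omega)
  rw [sum_Ioc_sub_const (by omega), segMeanZ, sum_Ioc_of_three_changes hf (by omega) (by omega),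
    sum_Ioc_of_three_changes hf (by omega) le_rfl,
    show max (c - max cm θm) 0 = c - cm - rm by omega, show max (c - max cm θ) 0 = max (c - θ) 0 by omega,
    show max (c - max cm θp) 0 = 0 by omega, show max (cp - max cm θm) 0 = cp - cm - rm by omega,
    show max (cp - max cm θ) 0 = cp - θ by omega, show max (cp - max cm θp) 0 = rp by omega]
  field_simp
  push_cast
  ring

end ThreeChanges

/-- Lemma B.1: explicit form of the centered partial sums
`F_c = ∑_{t=c_-+1}^{c} (f_t − f̄_{(c_-+1):c_+})` and of the CUSUM statistic
`𝒳_{c_-,c,c_+}(f)` for a signal with change points `θ_- < θ < θ_+`, on either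
side of the middle change point `θ`. -/
theorem cusum_signal_three_changes
    (cm cp θm θ θp : ℤ) (hθm : θm < θ) (hθp : θ < θp)
    (hcm : cm < θ) (hcp : θ < cp)
    (μ dm d0 dp : ℝ) (f : ℤ → ℝ)
    (hf : ∀ t ∈ Finset.Ioc cm cp,
      f t = μ + (if θm < t then dm else 0) + (if θ < t then d0 else 0)
        + (if θp < t then dp else 0))
    (rp rm : ℤ) (hrp : rp = max 0 (cp - θp)) (hrm : rm = max 0 (θm - cm)) :
    (∀ c : ℤ, max cm θm < c → c < θ →
      ((∑ t ∈ Finset.Ioc cm c, (f t - segMeanZ f cm cp)) =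
          -((((c : ℝ) - cm) * ((cp : ℝ) - θ)) / ((cp : ℝ) - cm)) * d0
          - (((c : ℝ) - cm) / ((cp : ℝ) - cm)) * (dp * rp)
          - (((cp : ℝ) - c) / ((cp : ℝ) - cm)) * (dm * rm)
        ∧ cusumZ f cm c cp =
          -Real.sqrt ((((c : ℝ) - cm) * ((cp : ℝ) - c)) / ((cp : ℝ) - cm)) *
            ((((cp : ℝ) - θ) * d0) / ((cp : ℝ) - c)
              + ((rp : ℝ) * dp) / ((cp : ℝ) - c)
              + ((rm : ℝ) * dm) / ((c : ℝ) - cm))))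
    ∧
    (∀ c : ℤ, θ ≤ c → c < min cp θp →
      ((∑ t ∈ Finset.Ioc cm c, (f t - segMeanZ f cm cp)) =
          -((((cp : ℝ) - c) * ((θ : ℝ) - cm)) / ((cp : ℝ) - cm)) * d0
          - (((c : ℝ) - cm) / ((cp : ℝ) - cm)) * (dp * rp)
          - (((cp : ℝ) - c) / ((cp : ℝ) - cm)) * (dm * rm)
        ∧ cusumZ f cm c cp =
          -Real.sqrt ((((c : ℝ) - cm) * ((cp : ℝ) - c)) / ((cp : ℝ) - cm)) *
            ((((θ : ℝ) - cm) * d0) / ((c : ℝ) - cm)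
              + ((rp : ℝ) * dp) / ((cp : ℝ) - c)
              + ((rm : ℝ) * dm) / ((c : ℝ) - cm)))) := by
  have hF := fun c => sum_Ioc_sub_segMeanZ_of_three_changes hf hcm.le hcp.le hrp hrm (c := c)
  refine ⟨fun c hc₁ hc₂ => ?_, fun c hc₁ hc₂ => ?_⟩
  · have hFc := hF c hc₁ (lt_min (by omega) (by omega))
    rw [max_eq_right (by omega : c - θ ≤ 0)] at hFc
    have := intCast_sub_ne_zero (show cm < c by omega)
    have := intCast_sub_ne_zero (show c < cp by omega)
    refine ⟨hFc.trans (by push_cast; ring),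
      cusumZ_eq_of_sum_sub_segMeanZ (by omega) (by omega) (hFc.trans ?_)⟩
    field_simp
    ring
  · have hFc := hF c (by omega) hc₂
    rw [max_eq_left (by omega : 0 ≤ c - θ)] at hFc
    have := intCast_sub_ne_zero (show cm < c by omega)
    have := intCast_sub_ne_zero (show c < cp by omega)
    have := intCast_sub_ne_zero (show cm < cp by omega)
    refine ⟨hFc.trans (by push_cast; field_simp; ring),
      cusumZ_eq_of_sum_sub_segMeanZ (by omega) (by omega) (hFc.trans ?_)⟩
    push_cast
    field_simp
    ring
end

section
/- (Lemma B.2.) Let x_1, …, x_n be real numbers, let A ⊆ {1, …, n−1} be a finite set, let c_∘ ∈ A, and let c_- be the largest element of (A \ {c_∘}) ∪ {0} smaller than c_∘ and c_+ the smallest element of (A \ {c_∘}) ∪ {n} larger than c_∘. Then RSS(A \ {c_∘}; x) − RSS(A; x) = 𝒳_{c_-, c_∘, c_+}(x)². -/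
open Finset

/-- Mean of `x` over the interval `(s, e]`. -/
noncomputable def segMean (x : ℕ → ℝ) (s e : ℕ) : ℝ :=
  (∑ t ∈ Finset.Ioc s e, x t) / ((e : ℝ) - (s : ℝ))

/-- CUSUM statistic of `x` at split point `b` on the interval `(s, e]`. -/
noncomputable def cusum (x : ℕ → ℝ) (s b e : ℕ) : ℝ :=
  Real.sqrt (((b : ℝ) - s) * ((e : ℝ) - b) / ((e : ℝ) - s)) *
    (segMean x s b - segMean x b e)

/-- Largest element of `A ∪ {0}` that is `< t`. -/
def lbd (A : Finset ℕ) (t : ℕ) : ℕ :=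
  WithBot.unbotD 0 ((insert 0 A).filter (fun a => a < t)).max

/-- Smallest element of `A ∪ {n}` that is `≥ t`. -/
def ubd (A : Finset ℕ) (n t : ℕ) : ℕ :=
  WithTop.untopD n (((insert n A).filter (fun a => t ≤ a)).min)

/-- Residual sum of squares of `x_1, …, x_n` with respect to the segmentation
of `{1, …, n}` induced by the set of change point candidates `A`:
each `t` lies in the segment `(lbd A t, ubd A n t]`. -/
noncomputable def RSS (x : ℕ → ℝ) (n : ℕ) (A : Finset ℕ) : ℝ :=
  ∑ t ∈ Finset.Icc 1 n, (x t - segMean x (lbd A t) (ubd A n t)) ^ 2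

/-- Schwarz criterion with penalty `ξ`. -/
noncomputable def SC (x : ℕ → ℝ) (n : ℕ) (ξ : ℝ) (A : Finset ℕ) : ℝ :=
  ((n : ℝ) / 2) * Real.log (RSS x n A / n) + (A.card : ℝ) * ξ

/-- `ε_1, …, ε_n` satisfies the uniform interval bound with level `ω`:
`|∑_{t=s+1}^e ε_t| ≤ ω √(e − s)` for all `0 ≤ s < e ≤ n`. -/
def UIB (ε : ℕ → ℝ) (n : ℕ) (ω : ℝ) : Prop :=
  ∀ s e : ℕ, s < e → e ≤ n →
    |∑ t ∈ Finset.Ioc s e, ε t| ≤ ω * Real.sqrt ((e : ℝ) - s)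


lemma lbd_eq' (A : Finset ℕ) (t b : ℕ) (hb : b ∈ insert 0 A) (hbt : b < t)
    (hmax : ∀ a ∈ insert 0 A, a < t → a ≤ b) : lbd A t = b := by
  unfold lbd
  have hb' : b ∈ (insert 0 A).filter (fun a => a < t) := mem_filter.2 ⟨hb, hbt⟩
  have hne : ((insert 0 A).filter (fun a => a < t)).Nonempty := ⟨b, hb'⟩
  rw [← Finset.coe_max' hne]
  simp only [WithBot.unbotD_coe]
  have hmem := Finset.max'_mem _ hne
  rw [mem_filter] at hmem
  exact le_antisymm (hmax _ hmem.1 hmem.2) (Finset.le_max' _ b hb')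

lemma ubd_eq' (A : Finset ℕ) (n t b : ℕ) (hb : b ∈ insert n A) (hbt : t ≤ b)
    (hmin : ∀ a ∈ insert n A, t ≤ a → b ≤ a) : ubd A n t = b := by
  unfold ubd
  have hb' : b ∈ (insert n A).filter (fun a => t ≤ a) := mem_filter.2 ⟨hb, hbt⟩
  have hne : ((insert n A).filter (fun a => t ≤ a)).Nonempty := ⟨b, hb'⟩
  rw [← Finset.coe_min' hne]
  simp only [WithTop.untopD_coe]
  have hmem := Finset.min'_mem _ hne
  rw [mem_filter] at hmem
  exact le_antisymm (Finset.min'_le _ b hb') (hmin _ hmem.1 hmem.2)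

lemma lbd_spec' (A : Finset ℕ) (t : ℕ) (ht : 0 < t) :
    lbd A t ∈ insert 0 A ∧ lbd A t < t ∧ ∀ a ∈ insert 0 A, a < t → a ≤ lbd A t := by
  have h0 : (0:ℕ) ∈ (insert 0 A).filter (fun a => a < t) :=
    mem_filter.2 ⟨mem_insert_self _ _, ht⟩
  have hne : ((insert 0 A).filter (fun a => a < t)).Nonempty := ⟨0, h0⟩
  unfold lbd
  rw [← Finset.coe_max' hne]
  simp only [WithBot.unbotD_coe]
  have hmem := Finset.max'_mem _ hne
  rw [mem_filter] at hmem
  refine ⟨hmem.1, hmem.2, fun a ha hat => Finset.le_max' _ a ?_⟩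
  exact mem_filter.2 ⟨ha, hat⟩

lemma ubd_spec' (A : Finset ℕ) (n t : ℕ) (ht : t ≤ n) :
    ubd A n t ∈ insert n A ∧ t ≤ ubd A n t ∧ ∀ a ∈ insert n A, t ≤ a → ubd A n t ≤ a := by
  have h0 : n ∈ (insert n A).filter (fun a => t ≤ a) :=
    mem_filter.2 ⟨mem_insert_self _ _, ht⟩
  have hne : ((insert n A).filter (fun a => t ≤ a)).Nonempty := ⟨n, h0⟩
  unfold ubd
  rw [← Finset.coe_min' hne]
  simp only [WithTop.untopD_coe]
  have hmem := Finset.min'_mem _ hne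
  rw [mem_filter] at hmem
  refine ⟨hmem.1, hmem.2, fun a ha hat => Finset.min'_le _ a ?_⟩
  exact mem_filter.2 ⟨ha, hat⟩

lemma sum_sq_sub_mean (x : ℕ → ℝ) (s e : ℕ) (h : s < e) :
    ∑ t ∈ Finset.Ioc s e, (x t - segMean x s e) ^ 2 =
    ∑ t ∈ Finset.Ioc s e, x t ^ 2 - (∑ t ∈ Finset.Ioc s e, x t) ^ 2 / ((e : ℝ) - s) := by
  have hN : (0:ℝ) < (e:ℝ) - s := by
    have : (s:ℝ) < e := Nat.cast_lt.2 h
    linarith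
  have hcard : ((Finset.Ioc s e).card : ℝ) = (e:ℝ) - s := by
    rw [Nat.card_Ioc, Nat.cast_sub h.le]
  unfold segMean
  set S := ∑ t ∈ Finset.Ioc s e, x t with hS
  have hexp : ∀ t ∈ Finset.Ioc s e,
      (x t - S / ((e:ℝ)-s))^2 = x t^2 - 2*(S/((e:ℝ)-s))*x t + (S/((e:ℝ)-s))^2 := by
    intro t _; ring
  rw [Finset.sum_congr rfl hexp, Finset.sum_add_distrib, Finset.sum_sub_distrib,
    ← Finset.mul_sum, Finset.sum_const, nsmul_eq_mul, hcard, ← hS]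
  field_simp
  ring

/-- Lemma B.2: removing a single change point candidate `c₀` from `A` increases
the residual sum of squares by exactly the squared CUSUM statistic evaluated at
`c₀` over the interval delimited by its neighbours `c_-` and `c_+` in
`(A \ {c₀}) ∪ {0, n}`. -/
theorem rss_diff_eq_cusum_sq
    (n : ℕ) (hn : 1 ≤ n) (x : ℕ → ℝ)
    (A : Finset ℕ) (hA : A ⊆ Finset.Icc 1 (n - 1))
    (c₀ : ℕ) (hc₀ : c₀ ∈ A)
    (cm cp : ℕ)
    (hcm1 : cm < c₀) (hcm2 : cm ∈ insert 0 (A.erase c₀))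
    (hcm3 : ∀ a ∈ insert 0 (A.erase c₀), a < c₀ → a ≤ cm)
    (hcp1 : c₀ < cp) (hcp2 : cp ∈ insert n (A.erase c₀))
    (hcp3 : ∀ a ∈ insert n (A.erase c₀), c₀ < a → cp ≤ a) :
    RSS x n (A.erase c₀) - RSS x n A = (cusum x cm c₀ cp) ^ 2 := by
  set A' := A.erase c₀ with hA'def
  have hc₀Icc := hA hc₀
  rw [mem_Icc] at hc₀Icc
  have hc₀n : c₀ < n := by omega
  have hc₀1 : 1 ≤ c₀ := hc₀Icc.1
  have hcpn : cp ≤ n := by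
    rcases mem_insert.1 hcp2 with h | h
    · omega
    · have := hA (mem_of_mem_erase h); rw [mem_Icc] at this; omega
  have hAsub : ∀ a ∈ A', a ∈ Finset.Icc 1 (n-1) := fun a ha => hA (mem_of_mem_erase ha)
  have hAeq : insert c₀ A' = A := insert_erase hc₀
  have hmem0 : insert 0 A = insert c₀ (insert 0 A') := by
    rw [Finset.insert_comm, hAeq]
  have hmemn : insert n A = insert c₀ (insert n A') := by
    rw [Finset.insert_comm, hAeq]
  -- elements of insert 0 A' greater than c₀ are ≥ cp; less than c₀ are ≤ cm
  have hsplit0 : ∀ a ∈ insert 0 A', a ≤ cm ∨ cp ≤ a := by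
    intro a ha
    rcases mem_insert.1 ha with rfl | ha'
    · left; omega
    · rcases lt_trichotomy a c₀ with h | h | h
      · exact Or.inl (hcm3 a ha h)
      · exact absurd h (ne_of_mem_erase ha')
      · exact Or.inr (hcp3 a (mem_insert_of_mem ha') h)
  have hsplitn : ∀ a ∈ insert n A', a ≤ cm ∨ cp ≤ a := by
    intro a ha
    rcases mem_insert.1 ha with rfl | ha'
    · right; exact hcp3 _ (mem_insert_self _ _) hc₀n
    · rcases lt_trichotomy a c₀ with h | h | h
      · exact Or.inl (hcm3 a (mem_insert_of_mem ha') h)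
      · exact absurd h (ne_of_mem_erase ha')
      · exact Or.inr (hcp3 a (mem_insert_of_mem ha') h)
  have hcmA' : 1 ≤ cm → cm ∈ insert n A' := by
    intro h1
    rcases mem_insert.1 hcm2 with rfl | h
    · omega
    · exact mem_insert_of_mem h
  have hcpA' : cp ∈ insert 0 A' ∨ cp = n := by
    rcases mem_insert.1 hcp2 with h | h
    · exact Or.inr h
    · exact Or.inl (mem_insert_of_mem h)
  -- key segment computations
  have key1 : ∀ t, cm < t → t ≤ c₀ → lbd A t = cm := by
    intro t h1 h2
    apply lbd_eq' A t cm (by rw [hmem0]; exact mem_insert_of_mem hcm2) h1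
    intro a ha hat
    rw [hmem0] at ha
    rcases mem_insert.1 ha with rfl | ha'
    · omega
    · rcases hsplit0 a ha' with h | h
      · exact h
      · omega
  have key2 : ∀ t, c₀ < t → t ≤ cp → lbd A t = c₀ := by
    intro t h1 h2
    apply lbd_eq' A t c₀ (by rw [hmem0]; exact mem_insert_self _ _) h1
    intro a ha hat
    rw [hmem0] at ha
    rcases mem_insert.1 ha with rfl | ha'
    · omega
    · rcases hsplit0 a ha' with h | h <;> omega
  have key3 : ∀ t, c₀ < t → t ≤ cp → ubd A n t = cp := by
    intro t h1 h2
    apply ubd_eq' A n t cp (by rw [hmemn]; exact mem_insert_of_mem (by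
      rcases hcpA' with h | rfl
      · rcases mem_insert.1 h with rfl | h'
        · omega
        · exact mem_insert_of_mem h'
      · exact mem_insert_self _ _)) h2
    intro a ha hat
    rw [hmemn] at ha
    rcases mem_insert.1 ha with rfl | ha'
    · omega
    · rcases hsplitn a ha' with h | h <;> omega
  have key4 : ∀ t, cm < t → t ≤ c₀ → ubd A n t = c₀ := by
    intro t h1 h2
    apply ubd_eq' A n t c₀ (by rw [hmemn]; exact mem_insert_self _ _) h2
    intro a ha hat
    rw [hmemn] at ha
    rcases mem_insert.1 ha with rfl | ha'
    · omega
    · rcases hsplitn a ha' with h | h <;> omega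
  have key5 : ∀ t, cm < t → t ≤ cp → lbd A' t = cm := by
    intro t h1 h2
    apply lbd_eq' A' t cm hcm2 h1
    intro a ha hat
    rcases hsplit0 a ha with h | h <;> omega
  have key6 : ∀ t, cm < t → t ≤ cp → ubd A' n t = cp := by
    intro t h1 h2
    apply ubd_eq' A' n t cp hcp2 h2
    intro a ha hat
    rcases hsplitn a ha with h | h <;> omega
  -- outer regions: lbd/ubd coincide
  have key7 : ∀ t, 0 < t → t ≤ n → (t ≤ cm ∨ cp < t) →
      lbd A t = lbd A' t ∧ ubd A n t = ubd A' n t := by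
    intro t ht1 ht2 hcase
    obtain ⟨hl1, hl2, hl3⟩ := lbd_spec' A' t ht1
    obtain ⟨hu1, hu2, hu3⟩ := ubd_spec' A' n t ht2
    constructor
    · apply lbd_eq' A t (lbd A' t) (by rw [hmem0]; exact mem_insert_of_mem hl1) hl2
      intro a ha hat
      rw [hmem0] at ha
      rcases mem_insert.1 ha with rfl | ha'
      · -- a = c₀ < t, so cp < t (since t ≤ cm impossible), cp ∈ insert 0 A', cp < t
        rcases hcase with h | h
        · omega
        · have hcp0 : cp ∈ insert 0 A' := by
            rcases hcpA' with h' | rfl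
            · exact h'
            · omega
          have := hl3 cp hcp0 h
          omega
      · exact hl3 a ha' hat
    · apply ubd_eq' A n t (ubd A' n t) (by rw [hmemn]; exact mem_insert_of_mem hu1) hu2
      intro a ha hat
      rw [hmemn] at ha
      rcases mem_insert.1 ha with rfl | ha'
      · rcases hcase with h | h
        · have := hu3 cm (hcmA' (by omega)) (by omega)
          omega
        · omega
      · exact hu3 a ha' hat
  -- sum splitting
  have hIcc : Finset.Icc 1 n = Finset.Ioc 0 n := by
    ext t; simp only [mem_Icc, mem_Ioc]; omega
  set fA : ℕ → ℝ := fun t => (x t - segMean x (lbd A t) (ubd A n t)) ^ 2 with hfA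
  set fA' : ℕ → ℝ := fun t => (x t - segMean x (lbd A' t) (ubd A' n t)) ^ 2 with hfA'
  have e1 : ∑ t ∈ Finset.Ioc 0 cm, fA t = ∑ t ∈ Finset.Ioc 0 cm, fA' t := by
    apply Finset.sum_congr rfl
    intro t ht; rw [mem_Ioc] at ht
    obtain ⟨h1, h2⟩ := key7 t ht.1 (by omega) (Or.inl ht.2)
    simp only [hfA, hfA', h1, h2]
  have e2 : ∑ t ∈ Finset.Ioc cp n, fA t = ∑ t ∈ Finset.Ioc cp n, fA' t := by
    apply Finset.sum_congr rfl
    intro t ht; rw [mem_Ioc] at ht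
    obtain ⟨h1, h2⟩ := key7 t (by omega) ht.2 (Or.inr ht.1)
    simp only [hfA, hfA', h1, h2]
  have e3 : ∑ t ∈ Finset.Ioc cm c₀, fA t = ∑ t ∈ Finset.Ioc cm c₀, (x t - segMean x cm c₀) ^ 2 := by
    apply Finset.sum_congr rfl
    intro t ht; rw [mem_Ioc] at ht
    simp only [hfA, key1 t ht.1 ht.2, key4 t ht.1 ht.2]
  have e4 : ∑ t ∈ Finset.Ioc c₀ cp, fA t = ∑ t ∈ Finset.Ioc c₀ cp, (x t - segMean x c₀ cp) ^ 2 := by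
    apply Finset.sum_congr rfl
    intro t ht; rw [mem_Ioc] at ht
    simp only [hfA, key2 t ht.1 ht.2, key3 t ht.1 ht.2]
  have e5 : ∑ t ∈ Finset.Ioc cm cp, fA' t = ∑ t ∈ Finset.Ioc cm cp, (x t - segMean x cm cp) ^ 2 := by
    apply Finset.sum_congr rfl
    intro t ht; rw [mem_Ioc] at ht
    simp only [hfA', key5 t ht.1 ht.2, key6 t ht.1 ht.2]
  have hRA : RSS x n A = ∑ t ∈ Finset.Ioc 0 cm, fA' t
      + (∑ t ∈ Finset.Ioc cm c₀, (x t - segMean x cm c₀) ^ 2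
        + ∑ t ∈ Finset.Ioc c₀ cp, (x t - segMean x c₀ cp) ^ 2)
      + ∑ t ∈ Finset.Ioc cp n, fA' t := by
    unfold RSS
    rw [hIcc, ← Finset.sum_Ioc_consecutive (fun t => fA t) (Nat.zero_le cp) hcpn,
      ← Finset.sum_Ioc_consecutive (fun t => fA t) (Nat.zero_le cm) (by omega : cm ≤ cp),
      ← Finset.sum_Ioc_consecutive (fun t => fA t) hcm1.le hcp1.le,
      e1, e2, e3, e4]
  have hRA' : RSS x n A' = ∑ t ∈ Finset.Ioc 0 cm, fA' t
      + ∑ t ∈ Finset.Ioc cm cp, (x t - segMean x cm cp) ^ 2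
      + ∑ t ∈ Finset.Ioc cp n, fA' t := by
    unfold RSS
    rw [hIcc, ← Finset.sum_Ioc_consecutive (fun t => fA' t) (Nat.zero_le cp) hcpn,
      ← Finset.sum_Ioc_consecutive (fun t => fA' t) (Nat.zero_le cm) (by omega : cm ≤ cp),
      e5]
  rw [hRA, hRA']
  -- algebra
  set S1 := ∑ t ∈ Finset.Ioc cm c₀, x t with hS1
  set S2 := ∑ t ∈ Finset.Ioc c₀ cp, x t with hS2
  have hSsum : ∑ t ∈ Finset.Ioc cm cp, x t = S1 + S2 :=
    (Finset.sum_Ioc_consecutive _ hcm1.le hcp1.le).symm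
  have hQsum : ∑ t ∈ Finset.Ioc cm cp, x t ^ 2
      = ∑ t ∈ Finset.Ioc cm c₀, x t ^ 2 + ∑ t ∈ Finset.Ioc c₀ cp, x t ^ 2 :=
    (Finset.sum_Ioc_consecutive _ hcm1.le hcp1.le).symm
  have hn1 : (0:ℝ) < (c₀:ℝ) - cm := by
    have : (cm:ℝ) < c₀ := Nat.cast_lt.2 hcm1
    linarith
  have hn2 : (0:ℝ) < (cp:ℝ) - c₀ := by
    have : (c₀:ℝ) < cp := Nat.cast_lt.2 hcp1
    linarith
  have hN : (0:ℝ) < (cp:ℝ) - cm := by linarith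
  rw [sum_sq_sub_mean x cm cp (by omega), sum_sq_sub_mean x cm c₀ hcm1,
    sum_sq_sub_mean x c₀ cp hcp1, hSsum, hQsum]
  unfold cusum segMean
  rw [mul_pow, Real.sq_sqrt (by positivity : (0:ℝ) ≤ ((c₀:ℝ) - cm) * ((cp:ℝ) - c₀) / ((cp:ℝ) - cm))]
  rw [← hS1, ← hS2]
  field_simp
  ring
end

section
/- (Mean-value bound on the CUSUM weights.) For integers c_- < θ ≤ c < c_+, setting W_k = (c_+ − c_-)/((k − c_-)(c_+ − k)) for c_- < k < c_+, one has | √(W_c) − √(W_θ) | ≤ √2 · (c − θ) / min(θ − c_-, c_+ − c)^{3/2}. -/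
/-!
Write `a = θ - c_-`, `b = c_+ - c`, `d = c - θ`, so that `W_θ = L / P` and `W_c = L / Q` with
`L = a + b + d`, `P = a (b + d)`, `Q = (a + d) b`. Reflecting `k ↦ -k` swaps `a` and `b`, so
we may take `a ≤ b`; then `P ≤ Q`, and since `√(P/Q) ≥ P/Q`,
`√W_θ - √W_c ≤ √(L/P) · (Q - P)/Q`. Finally `L/P ≤ 2/a` and `(Q - P)/Q = d (b - a)/Q ≤ d/a`.
-/

namespace Real

lemma sqrt_div_sub_sqrt_div_le {L P Q : ℝ} (hP : 0 < P) (hPQ : P ≤ Q) :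
    √(L / P) - √(L / Q) ≤ √(L / P) * (1 - P / Q) := by
  have hQ : 0 < Q := hP.trans_le hPQ
  have hratio : √(L / Q) = √(L / P) * √(P / Q) := by
    rw [← sqrt_mul' _ (by positivity)]
    congr 1
    field_simp
  have hle : P / Q ≤ √(P / Q) := le_sqrt_self_iff.2 ((div_le_one hQ).2 hPQ)
  rw [hratio]
  nlinarith [sqrt_nonneg (L / P)]

lemma rpow_three_halves {a : ℝ} (ha : 0 ≤ a) : a ^ ((3 : ℝ) / 2) = a * √a := by
  rw [show (3 : ℝ) / 2 = 1 + 1 / 2 by norm_num, rpow_add' ha (by norm_num), rpow_one,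
    sqrt_eq_rpow]

end Real

open Real

noncomputable def cusumWeight (cm cp k : ℝ) : ℝ := (cp - cm) / ((k - cm) * (cp - k))

lemma cusumWeight_neg (cm cp k : ℝ) : cusumWeight (-cp) (-cm) (-k) = cusumWeight cm cp k := by
  unfold cusumWeight; ring

section
variable {cm θ c cp : ℝ}

lemma cusumWeight_le_cusumWeight (h1 : cm < θ) (h2 : θ ≤ c) (hmin : θ - cm ≤ cp - c) :
    cusumWeight cm cp c ≤ cusumWeight cm cp θ := by
  unfold cusumWeight
  exact div_le_div_of_nonneg_left (by linarith) (by nlinarith) (by nlinarith)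

lemma sqrt_cusumWeight_sub_le (h1 : cm < θ) (h2 : θ ≤ c) (hmin : θ - cm ≤ cp - c) :
    √(cusumWeight cm cp θ) - √(cusumWeight cm cp c)
      ≤ √2 * (c - θ) / (θ - cm) ^ ((3 : ℝ) / 2) := by
  have ha : 0 < θ - cm := by linarith
  have hP : 0 < (θ - cm) * (cp - θ) := by nlinarith
  have hQ : 0 < (c - cm) * (cp - c) := by nlinarith
  have hPQ : (θ - cm) * (cp - θ) ≤ (c - cm) * (cp - c) := by nlinarith
  have hW : cusumWeight cm cp θ ≤ 2 / (θ - cm) := by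
    unfold cusumWeight
    rw [div_le_div_iff₀ hP ha]
    nlinarith
  have hgap : 1 - (θ - cm) * (cp - θ) / ((c - cm) * (cp - c)) ≤ (c - θ) / (θ - cm) := by
    rw [one_sub_div hQ.ne', div_le_div_iff₀ hQ ha]
    have hd : 0 ≤ c - θ := by linarith
    nlinarith [mul_nonneg (mul_nonneg hd hd) (by linarith : 0 ≤ cp - c),
      mul_nonneg hd (mul_nonneg ha.le ha.le)]
  have hgap_nonneg : 0 ≤ 1 - (θ - cm) * (cp - θ) / ((c - cm) * (cp - c)) :=
    sub_nonneg.2 ((div_le_one hQ).2 hPQ)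
  calc √(cusumWeight cm cp θ) - √(cusumWeight cm cp c)
      ≤ √(cusumWeight cm cp θ) * (1 - (θ - cm) * (cp - θ) / ((c - cm) * (cp - c))) :=
        sqrt_div_sub_sqrt_div_le hP hPQ
    _ ≤ √(2 / (θ - cm)) * ((c - θ) / (θ - cm)) := by
        gcongr
    _ = √2 * (c - θ) / (θ - cm) ^ ((3 : ℝ) / 2) := by
        rw [sqrt_div' _ ha.le, rpow_three_halves ha.le]
        field_simp

lemma abs_sqrt_cusumWeight_sub_le (h1 : cm < θ) (h2 : θ ≤ c) (h3 : c < cp) :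
    |√(cusumWeight cm cp c) - √(cusumWeight cm cp θ)|
      ≤ √2 * (c - θ) / (min (θ - cm) (cp - c)) ^ ((3 : ℝ) / 2) := by
  rcases le_total (θ - cm) (cp - c) with hmin | hmin
  · rw [min_eq_left hmin, abs_sub_comm,
      abs_of_nonneg (sub_nonneg.2 (sqrt_le_sqrt (cusumWeight_le_cusumWeight h1 h2 hmin)))]
    exact sqrt_cusumWeight_sub_le h1 h2 hmin
  · have h1' : -cp < -c := neg_lt_neg h3
    have h2' : -c ≤ -θ := neg_le_neg h2
    have hmin' : -c - -cp ≤ -cm - -θ := by linarith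
    have hle := cusumWeight_le_cusumWeight h1' h2' hmin'
    have hbound := sqrt_cusumWeight_sub_le h1' h2' hmin'
    simp only [cusumWeight_neg, neg_sub_neg] at hle hbound
    rw [min_eq_right hmin, abs_of_nonneg (sub_nonneg.2 (sqrt_le_sqrt hle))]
    exact hbound

end

/-- Mean-value bound on the CUSUM weights: for integers `c_- < θ ≤ c < c_+`,
with `W_k = (c_+ − c_-)/((k − c_-)(c_+ − k))`,
`|√W_c − √W_θ| ≤ √2 (c − θ)/min(θ − c_-, c_+ − c)^{3/2}`. -/
theorem cusum_weight_mean_value_bound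
    (cm θ c cp : ℤ) (h1 : cm < θ) (h2 : θ ≤ c) (h3 : c < cp) :
    |Real.sqrt (((cp : ℝ) - cm) / (((c : ℝ) - cm) * ((cp : ℝ) - c)))
        - Real.sqrt (((cp : ℝ) - cm) / (((θ : ℝ) - cm) * ((cp : ℝ) - θ)))|
      ≤ Real.sqrt 2 * ((c : ℝ) - θ)
          / (min ((θ : ℝ) - cm) ((cp : ℝ) - c)) ^ ((3 : ℝ) / 2) :=
  abs_sqrt_cusumWeight_sub_le (by exact_mod_cast h1) (by exact_mod_cast h2)
    (by exact_mod_cast h3)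
end

section
/- (Deterministic candidate-count bound of Proposition 4.2.) Let (F_m) be the Fibonacci sequence with F_0 = F_1 = 1 and F_m = F_{m−1} + F_{m−2}, let G_0 > 0 and G_m = F_m · G_0, let η > 0, C_asym ≥ 1, H ≥ 1 an integer, and let ℋ ⊆ {1, …, H}² be a set of bandwidth pairs such that every (ℓ, r) ∈ ℋ satisfies max(G_ℓ, G_r) ≤ C_asym · min(G_ℓ, G_r). Let n > 0 and let a : ℋ → ℝ satisfy 0 ≤ a(ℓ, r) ≤ n/(η · min(G_ℓ, G_r)) for all (ℓ, r) ∈ ℋ. Then ∑_{(ℓ,r) ∈ ℋ} a(ℓ, r) ≤ (2 C_asym n / (η G_0)) · ψ, where ψ = ∑_{ℓ=1}^{∞} ∑_{r=1}^{∞} 1/(F_ℓ + F_r) (a finite quantity). -/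
private lemma sqrt_two_pow_le_fib (m : ℕ) : Real.sqrt 2 ^ m ≤ (Nat.fib (m + 2) : ℝ) := by
  have h2 : (1:ℝ) ≤ Real.sqrt 2 := by
    rw [show (1:ℝ) = Real.sqrt 1 by simp]
    exact Real.sqrt_le_sqrt (by norm_num)
  induction m using Nat.twoStepInduction with
  | zero => simp
  | one =>
    have : Real.sqrt 2 ≤ 2 := by
      nlinarith [Real.sq_sqrt (by norm_num : (2:ℝ) ≥ 0)]
    show Real.sqrt 2 ^ 1 ≤ ((Nat.fib 3 : ℕ) : ℝ)
    rw [show Nat.fib 3 = 2 from rfl, pow_one]; exact_mod_cast this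
  | more m ih1 ih2 =>
    have hfib : Nat.fib (m + 4) = Nat.fib (m + 3) + Nat.fib (m + 2) := by
      rw [show m + 4 = (m + 2) + 2 by ring, Nat.fib_add_two, show m + 2 + 1 = m + 3 by ring]; omega
    have hsq : Real.sqrt 2 ^ 2 = 2 := Real.sq_sqrt (by norm_num)
    have : Real.sqrt 2 ^ (m + 2) = Real.sqrt 2 ^ m * 2 := by
      rw [pow_add, hsq]
    rw [show m + 2 + 2 = m + 4 by ring, hfib]
    push_cast
    calc Real.sqrt 2 ^ (m + 2) = Real.sqrt 2 ^ m * 2 := this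
      _ ≤ Real.sqrt 2 ^ (m+1) + Real.sqrt 2 ^ m := by
          rw [pow_succ]
          nlinarith [pow_nonneg (le_trans zero_le_one h2) m]
      _ ≤ (Nat.fib (m + 3) : ℝ) + (Nat.fib (m + 2) : ℝ) := by
          have := ih2
          rw [show m + 1 + 2 = m + 3 by ring] at this
          exact add_le_add this ih1

private lemma fib_summand_summable :
    Summable (fun p : ℕ × ℕ => (1 : ℝ) / ((Nat.fib (p.1 + 2) : ℝ) + (Nat.fib (p.2 + 2) : ℝ))) := by
  set c : ℝ := (Real.sqrt (Real.sqrt 2))⁻¹ with hc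
  have hs2 : (1:ℝ) < Real.sqrt 2 := by
    nlinarith [Real.sq_sqrt (by norm_num : (2:ℝ) ≥ 0), Real.sqrt_nonneg (2:ℝ)]
  have hs4 : (1:ℝ) < Real.sqrt (Real.sqrt 2) := by
    nlinarith [Real.sq_sqrt (le_of_lt (lt_trans zero_lt_one hs2)),
      Real.sqrt_nonneg (Real.sqrt 2)]
  have hc0 : 0 ≤ c := inv_nonneg.mpr (le_of_lt (lt_trans zero_lt_one hs4))
  have hc1 : c < 1 := inv_lt_one_of_one_lt₀ hs4
  have hg : Summable (fun p : ℕ × ℕ => c ^ p.1 * c ^ p.2) :=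
    Summable.mul_of_nonneg (summable_geometric_of_lt_one hc0 hc1)
      (summable_geometric_of_lt_one hc0 hc1)
      (fun i => pow_nonneg hc0 i) (fun i => pow_nonneg hc0 i)
  refine hg.of_nonneg_of_le (fun p => by positivity) (fun p => ?_)
  obtain ⟨l, r⟩ := p
  have h1 : (1:ℝ) ≤ (Nat.fib (l + 2) : ℝ) := by
    exact_mod_cast Nat.fib_pos.mpr (by omega)
  have h2 : (1:ℝ) ≤ (Nat.fib (r + 2) : ℝ) := by
    exact_mod_cast Nat.fib_pos.mpr (by omega)
  have key : Real.sqrt (Real.sqrt 2) ^ l * Real.sqrt (Real.sqrt 2) ^ r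
      ≤ (Nat.fib (l + 2) : ℝ) + (Nat.fib (r + 2) : ℝ) := by
    have hl := sqrt_two_pow_le_fib l
    have hr := sqrt_two_pow_le_fib r
    have hsq : Real.sqrt (Real.sqrt 2) ^ 2 = Real.sqrt 2 :=
      Real.sq_sqrt (Real.sqrt_nonneg 2)
    have h4 : (0:ℝ) ≤ Real.sqrt (Real.sqrt 2) := Real.sqrt_nonneg _
    -- (√√2)^l * (√√2)^r = √(√2^l * √2^r) ≤ √(fib * fib) ≤ max ≤ sum
    have hprod : (Real.sqrt (Real.sqrt 2) ^ l * Real.sqrt (Real.sqrt 2) ^ r) ^ 2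
        = Real.sqrt 2 ^ l * Real.sqrt 2 ^ r := by
      rw [mul_pow, ← pow_mul, ← pow_mul, mul_comm l 2, mul_comm r 2, pow_mul, pow_mul, hsq]
    have hfibprod : Real.sqrt 2 ^ l * Real.sqrt 2 ^ r
        ≤ (Nat.fib (l + 2) : ℝ) * (Nat.fib (r + 2) : ℝ) := by
      have hnn : (0:ℝ) ≤ Real.sqrt 2 ^ l := pow_nonneg (Real.sqrt_nonneg 2) l
      have hnn2 : (0:ℝ) ≤ Real.sqrt 2 ^ r := pow_nonneg (Real.sqrt_nonneg 2) r
      exact mul_le_mul hl hr hnn2 (by linarith)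
    nlinarith [mul_nonneg (pow_nonneg h4 l) (pow_nonneg h4 r),
      mul_le_mul h1 h2 (by linarith) (by linarith)]
  have hpos : (0:ℝ) < (Nat.fib (l + 2) : ℝ) + (Nat.fib (r + 2) : ℝ) := by linarith
  rw [div_le_iff₀ hpos]
  have hcpos : 0 < Real.sqrt (Real.sqrt 2) := lt_trans zero_lt_one hs4
  have : c ^ l * c ^ r * (Real.sqrt (Real.sqrt 2) ^ l * Real.sqrt (Real.sqrt 2) ^ r) = 1 := by
    rw [hc, inv_pow, inv_pow]
    field_simp
  calc (1:ℝ) = c ^ l * c ^ r * (Real.sqrt (Real.sqrt 2) ^ l * Real.sqrt (Real.sqrt 2) ^ r) :=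
        this.symm
    _ ≤ c ^ l * c ^ r * ((Nat.fib (l + 2) : ℝ) + (Nat.fib (r + 2) : ℝ)) := by
        apply mul_le_mul_of_nonneg_left key
        exact mul_nonneg (pow_nonneg hc0 l) (pow_nonneg hc0 r)

/-- Deterministic candidate-count bound of Proposition 4.2: with Fibonacci
bandwidths `G_m = F_m G_0` (where `F_m = Nat.fib (m+1)`), any family of
candidate counts `a(ℓ, r) ≤ n/(η min(G_ℓ, G_r))` over a set `ℋ` of balanced
bandwidth pairs satisfies
`∑_{(ℓ,r) ∈ ℋ} a(ℓ, r) ≤ (2 C_asym n/(η G_0)) ψ`, where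
`ψ = ∑_{ℓ,r ≥ 1} 1/(F_ℓ + F_r)`. -/
theorem candidate_count_bound
    (G₀ : ℝ) (hG₀ : 0 < G₀) (η : ℝ) (hη : 0 < η)
    (Casym : ℝ) (hC : 1 ≤ Casym) (H : ℕ) (hH : 1 ≤ H)
    (G : ℕ → ℝ) (hG : ∀ m, G m = (Nat.fib (m + 1) : ℝ) * G₀)
    (ℋ : Finset (ℕ × ℕ))
    (hℋ : ∀ p ∈ ℋ, p.1 ∈ Finset.Icc 1 H ∧ p.2 ∈ Finset.Icc 1 H)
    (hbal : ∀ p ∈ ℋ, max (G p.1) (G p.2) ≤ Casym * min (G p.1) (G p.2))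
    (n : ℝ) (hn : 0 < n) (a : ℕ × ℕ → ℝ)
    (ha : ∀ p ∈ ℋ, 0 ≤ a p ∧ a p ≤ n / (η * min (G p.1) (G p.2))) :
    ∑ p ∈ ℋ, a p
      ≤ (2 * Casym * n / (η * G₀)) *
          ∑' p : ℕ × ℕ, (1 : ℝ) / ((Nat.fib (p.1 + 2) : ℝ) + (Nat.fib (p.2 + 2) : ℝ)) := by
  set f : ℕ × ℕ → ℝ :=
    fun p => (1 : ℝ) / ((Nat.fib (p.1 + 2) : ℝ) + (Nat.fib (p.2 + 2) : ℝ)) with hf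
  set K : ℝ := 2 * Casym * n / (η * G₀) with hK
  have hKpos : 0 < K := by
    apply div_pos (by nlinarith) (by positivity)
  have fib_pos : ∀ m : ℕ, (0:ℝ) < (Nat.fib (m + 1) : ℝ) := by
    intro m
    exact_mod_cast Nat.fib_pos.mpr (by omega)
  -- step A: per-term bound
  have stepA : ∀ p ∈ ℋ, a p ≤ K * f (p.1 - 1, p.2 - 1) := by
    intro p hp
    obtain ⟨hl, hr⟩ := hℋ p hp
    simp only [Finset.mem_Icc] at hl hr
    obtain ⟨hl1, _⟩ := hl
    obtain ⟨hr1, _⟩ := hr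
    have hidx1 : p.1 - 1 + 2 = p.1 + 1 := by omega
    have hidx2 : p.2 - 1 + 2 = p.2 + 1 := by omega
    set Fl : ℝ := (Nat.fib (p.1 + 1) : ℝ) with hFl
    set Fr : ℝ := (Nat.fib (p.2 + 1) : ℝ) with hFr
    have hFl0 : 0 < Fl := fib_pos p.1
    have hFr0 : 0 < Fr := fib_pos p.2
    have hfval : f (p.1 - 1, p.2 - 1) = 1 / (Fl + Fr) := by
      simp only [hf, hidx1, hidx2, hFl, hFr]
    rw [hfval]
    have hmin : min (G p.1) (G p.2) = min Fl Fr * G₀ := by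
      rw [hG p.1, hG p.2, min_mul_of_nonneg _ _ (le_of_lt hG₀)]
    have hmax : max (G p.1) (G p.2) = max Fl Fr * G₀ := by
      rw [hG p.1, hG p.2, max_mul_of_nonneg _ _ (le_of_lt hG₀)]
    have hbal' := hbal p hp
    rw [hmin, hmax] at hbal'
    have hminpos : 0 < min Fl Fr := lt_min hFl0 hFr0
    have hmaxbal : max Fl Fr ≤ Casym * min Fl Fr := by
      have := (mul_le_mul_iff_left₀ hG₀).mp (by linarith [hbal'] :
        max Fl Fr * G₀ ≤ (Casym * min Fl Fr) * G₀)
      linarith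
    have hsum : Fl + Fr ≤ 2 * Casym * min Fl Fr := by
      have h1 : Fl ≤ max Fl Fr := le_max_left _ _
      have h2 : Fr ≤ max Fl Fr := le_max_right _ _
      linarith
    have ha2 := (ha p hp).2
    rw [hmin] at ha2
    refine le_trans ha2 ?_
    rw [hK, div_mul_eq_mul_div, mul_one_div, div_div, div_le_div_iff₀ (by positivity) (by positivity)]
    have hFlFr : 0 < Fl + Fr := by linarith
    nlinarith [mul_pos hη hG₀, mul_pos hn hη, mul_pos (mul_pos hn hη) hG₀]
  -- step B
  have hinj : Set.InjOn (fun p : ℕ × ℕ => (p.1 - 1, p.2 - 1)) ℋ := by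
    intro p hp q hq hpq
    obtain ⟨hl, hr⟩ := hℋ p hp
    obtain ⟨hl', hr'⟩ := hℋ q hq
    simp only [Finset.mem_Icc] at hl hr hl' hr'
    have := Prod.mk.injEq (p.1 - 1) (p.2 - 1) (q.1 - 1) (q.2 - 1) ▸ hpq
    simp only [Prod.mk.injEq] at hpq
    exact Prod.ext (by omega) (by omega)
  have stepB : ∑ p ∈ ℋ, f (p.1 - 1, p.2 - 1)
      = ∑ q ∈ ℋ.image (fun p : ℕ × ℕ => (p.1 - 1, p.2 - 1)), f q :=
    (Finset.sum_image (fun p hp q hq h => hinj hp hq h)).symm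
  have stepC : ∑ q ∈ ℋ.image (fun p : ℕ × ℕ => (p.1 - 1, p.2 - 1)), f q ≤ ∑' q, f q :=
    Summable.sum_le_tsum _ (fun q _ => by positivity) fib_summand_summable
  calc ∑ p ∈ ℋ, a p ≤ ∑ p ∈ ℋ, K * f (p.1 - 1, p.2 - 1) := Finset.sum_le_sum stepA
    _ = K * ∑ p ∈ ℋ, f (p.1 - 1, p.2 - 1) := by rw [Finset.mul_sum]
    _ ≤ K * ∑' q, f q := by
        apply mul_le_mul_of_nonneg_left _ (le_of_lt hKpos)
        rw [stepB]; exact stepC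
end
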